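/- Let f ∈ ℓ¹(ℤ) with uncentered frequency function r̃_n. Then for every ε > 0, the set { n ∈ ℤ : r̃_n/|n| ∉ [0, ε) ∪ (1/2-ε, 1/2+ε) } is finite. -/
import Mathlib


open scoped BigOperators

noncomputable def udiscAvg (f : ℤ → ℝ) (ρ s : ℕ) (n : ℤ) : ℝ :=
  (∑ j ∈ Finset.Icc (-(ρ : ℤ)) (s : ℤ), |f (n + j)|) / (ρ + s + 1)

noncomputable def udiscMax (f : ℤ → ℝ) (n : ℤ) : ℝ :=
  ⨆ p : ℕ × ℕ, udiscAvg f p.1 p.2 n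

/-- Uncentered discrete frequency function `r̃_n = (1/2) min {ρ+s : M̃f(n) = A_{ρ,s}f(n)}`. -/
noncomputable def udiscFreq (f : ℤ → ℝ) (n : ℤ) : ℝ :=
  ((sInf {m : ℕ | ∃ ρ s : ℕ, ρ + s = m ∧ udiscMax f n = udiscAvg f ρ s n} : ℕ) : ℝ) / 2

namespace Stmt12Aux

lemma sum_shift (f : ℤ → ℝ) (n a b : ℤ) :
    ∑ j ∈ Finset.Icc a b, |f (n + j)| = ∑ k ∈ Finset.Icc (n + a) (n + b), |f k| := by
  rw [← Finset.map_add_left_Icc, Finset.sum_map]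
  rfl

lemma avg_eq (f : ℤ → ℝ) (ρ s : ℕ) (n : ℤ) :
    udiscAvg f ρ s n = (∑ k ∈ Finset.Icc (n - (ρ : ℤ)) (n + (s : ℤ)), |f k|) / ((ρ : ℝ) + s + 1) := by
  unfold udiscAvg
  rw [sum_shift, sub_eq_add_neg]

lemma sum_le_S (f : ℤ → ℝ) (hf : Summable fun n => |f n|) (t : Finset ℤ) :
    ∑ k ∈ t, |f k| ≤ ∑' k, |f k| :=
  Summable.sum_le_tsum t (fun _ _ => abs_nonneg _) hf

lemma avg_nonneg (f : ℤ → ℝ) (ρ s : ℕ) (n : ℤ) : 0 ≤ udiscAvg f ρ s n := by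
  unfold udiscAvg
  apply div_nonneg (Finset.sum_nonneg fun _ _ => abs_nonneg _)
  positivity

lemma avg_le_S (f : ℤ → ℝ) (hf : Summable fun n => |f n|) (ρ s : ℕ) (n : ℤ) :
    udiscAvg f ρ s n ≤ ∑' k, |f k| := by
  unfold udiscAvg
  have h1 : ∑ j ∈ Finset.Icc (-(ρ : ℤ)) (s : ℤ), |f (n + j)| ≤ ∑' k, |f k| := by
    rw [sum_shift]; exact sum_le_S f hf _
  have h2 : (1 : ℝ) ≤ (ρ : ℝ) + s + 1 := by
    have hρ : (0:ℝ) ≤ (ρ:ℝ) := Nat.cast_nonneg ρ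
    have hs : (0:ℝ) ≤ (s:ℝ) := Nat.cast_nonneg s
    linarith
  calc (∑ j ∈ Finset.Icc (-(ρ : ℤ)) (s : ℤ), |f (n + j)|) / ((ρ : ℝ) + s + 1)
      ≤ (∑ j ∈ Finset.Icc (-(ρ : ℤ)) (s : ℤ), |f (n + j)|) / 1 := by
        apply div_le_div_of_nonneg_left (Finset.sum_nonneg fun _ _ => abs_nonneg _) one_pos h2
    _ ≤ ∑' k, |f k| := by rw [div_one]; exact h1

lemma bdd (f : ℤ → ℝ) (hf : Summable fun n => |f n|) (n : ℤ) :
    BddAbove (Set.range fun p : ℕ × ℕ => udiscAvg f p.1 p.2 n) := by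
  refine ⟨∑' k, |f k|, ?_⟩
  rintro x ⟨p, rfl⟩
  exact avg_le_S f hf p.1 p.2 n

lemma avg_le_max (f : ℤ → ℝ) (hf : Summable fun n => |f n|) (ρ s : ℕ) (n : ℤ) :
    udiscAvg f ρ s n ≤ udiscMax f n :=
  le_ciSup (bdd f hf n) (ρ, s)

set_option maxHeartbeats 1000000 in
lemma key (f : ℤ → ℝ) (hf : Summable fun n => |f n|) (ε : ℝ) (hε : 0 < ε)
    (N : ℕ)
    (hS : 0 < ∑' k, |f k|)
    (hN : (∑' k, |f k|) - (∑' k, |f k|) * ε / (2 * (1 + ε)) <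
      ∑ k ∈ Finset.Icc (-(N : ℤ)) (N : ℤ), |f k|)
    (n : ℤ) (hn : 0 < n)
    (h1 : (N : ℝ) / (2 * ε) < (n : ℝ)) (h2 : (1 + ε) * (2 * (N : ℝ) + 1) / ε < (n : ℝ))
    (h3 : 2 * (N : ℝ) + 1 ≤ (n : ℝ)) :
    udiscFreq f n / |(n : ℝ)| ∈ Set.Ico (0 : ℝ) ε ∪ Set.Ioo (1 / 2 - ε) (1 / 2 + ε) := by
  set S := ∑' k, |f k| with hSdef
  set δ := S * ε / (2 * (1 + ε)) with hδdef
  have hδpos : 0 < δ := by positivity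
  have hδS : δ < S := by
    rw [hδdef, div_lt_iff₀ (by positivity)]
    nlinarith
  have hnR : (0 : ℝ) < (n : ℝ) := by exact_mod_cast hn
  have habs : |(n : ℝ)| = (n : ℝ) := abs_of_pos hnR
  have h1' : (N : ℝ) < 2 * ε * (n : ℝ) := by
    rw [div_lt_iff₀ (by positivity)] at h1; linarith
  have h2' : (1 + ε) * (2 * (N : ℝ) + 1) < ε * (n : ℝ) := by
    rw [div_lt_iff₀ hε] at h2; linarith
  set K := {m : ℕ | ∃ ρ s : ℕ, ρ + s = m ∧ udiscMax f n = udiscAvg f ρ s n} with hKdef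
  have hfreq : udiscFreq f n = ((sInf K : ℕ) : ℝ) / 2 := rfl
  by_cases hK : K.Nonempty
  · obtain ⟨ρ, s, hρs, heq⟩ := Nat.sInf_mem hK
    have hX : (0 : ℝ) < (ρ : ℝ) + s + 1 := by positivity
    have hD : (0 : ℝ) < (n : ℝ) + 2 * N + 1 := by positivity
    -- lower bound on the maximal function
    have hlow : (S - δ) / ((n : ℝ) + 2 * N + 1) ≤ udiscMax f n := by
      have hsub : Finset.Icc (-(N : ℤ)) (N : ℤ)
          ⊆ Finset.Icc (n - ((n.toNat + N : ℕ) : ℤ)) (n + ((N : ℕ) : ℤ)) := by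
        intro k hk
        simp only [Finset.mem_Icc] at *
        push_cast
        omega
      have hsum : S - δ < ∑ k ∈ Finset.Icc (n - ((n.toNat + N : ℕ) : ℤ)) (n + ((N : ℕ) : ℤ)), |f k| :=
        hN.trans_le (Finset.sum_le_sum_of_subset_of_nonneg hsub fun _ _ _ => abs_nonneg _)
      have hle := avg_le_max f hf (n.toNat + N) N n
      rw [avg_eq] at hle
      have hden : ((n.toNat + N : ℕ) : ℝ) + (N : ℝ) + 1 = (n : ℝ) + 2 * N + 1 := by
        have : ((n.toNat : ℕ) : ℝ) = (n : ℝ) := by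
          exact_mod_cast congrArg (Int.cast : ℤ → ℝ) (Int.toNat_of_nonneg hn.le)
        push_cast
        rw [this]; ring
      rw [hden] at hle
      refine le_trans ?_ hle
      exact div_le_div_of_nonneg_right hsum.le hD.le
    have hmax_eq : udiscMax f n
        = (∑ k ∈ Finset.Icc (n - (ρ : ℤ)) (n + (s : ℤ)), |f k|) / ((ρ : ℝ) + s + 1) := by
      rw [heq, avg_eq]
    have hfreqv : udiscFreq f n / |(n : ℝ)| = ((ρ : ℝ) + s) / (2 * (n : ℝ)) := by
      rw [hfreq, ← hρs, habs]
      push_cast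
      ring
    have hδeq : δ * (2 * (1 + ε)) = S * ε := by
      rw [hδdef]; field_simp
    by_cases hc : n - (ρ : ℤ) ≤ (N : ℤ)
    · -- the optimal interval reaches the bulk of the mass
      right
      have hmub : udiscMax f n ≤ S / ((ρ : ℝ) + s + 1) := by
        rw [hmax_eq]
        exact div_le_div_of_nonneg_right (sum_le_S f hf _) hX.le
      have hc1 := hlow.trans hmub
      rw [div_le_div_iff₀ hD hX] at hc1
      -- hc1 : (S - δ) * ((ρ:ℝ)+s+1) ≤ S * ((n:ℝ)+2*N+1)
      have hstep : (2 + ε) * ((ρ : ℝ) + s + 1) ≤ 2 * (1 + ε) * ((n : ℝ) + 2 * N + 1) := by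
        have hmul := mul_le_mul_of_nonneg_left hc1 (by positivity : (0:ℝ) ≤ 2 * (1 + ε))
        have hδeq' : δ * (2 * (1 + ε)) * ((ρ : ℝ) + s + 1) = S * ε * ((ρ : ℝ) + s + 1) := by
          rw [hδeq]
        have hfin : S * ((2 + ε) * ((ρ : ℝ) + s + 1)) ≤ S * (2 * (1 + ε) * ((n : ℝ) + 2 * N + 1)) := by
          nlinarith [hmul, hδeq']
        exact le_of_mul_le_mul_left hfin hS
      have hml : (n : ℝ) - N ≤ (ρ : ℝ) + s := by
        have : (n : ℤ) - (N : ℤ) ≤ (ρ : ℤ) + (s : ℤ) := by omega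
        exact_mod_cast this
      rw [hfreqv]
      constructor
      · rw [lt_div_iff₀ (by positivity)]
        linarith
      · rw [div_lt_iff₀ (by positivity)]
        nlinarith [hstep, h2', hε, hnR, mul_pos hε hnR, mul_pos hε (mul_pos hε hnR)]
    · -- the optimal interval misses the bulk of the mass
      left
      have hdisj : Disjoint (Finset.Icc (n - (ρ : ℤ)) (n + (s : ℤ))) (Finset.Icc (-(N : ℤ)) (N : ℤ)) := by
        rw [Finset.disjoint_left]
        intro k hk hk'
        simp only [Finset.mem_Icc] at *
        omega
      have hsum_small : ∑ k ∈ Finset.Icc (n - (ρ : ℤ)) (n + (s : ℤ)), |f k| ≤ δ := by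
        have hU : ∑ k ∈ Finset.Icc (n - (ρ : ℤ)) (n + (s : ℤ)), |f k|
            + ∑ k ∈ Finset.Icc (-(N : ℤ)) (N : ℤ), |f k| ≤ S := by
          rw [← Finset.sum_union hdisj]
          exact sum_le_S f hf _
        linarith [hN]
      have hub : udiscMax f n ≤ δ / ((ρ : ℝ) + s + 1) := by
        rw [hmax_eq]
        exact div_le_div_of_nonneg_right hsum_small hX.le
      have hc1 := hlow.trans hub
      rw [div_le_div_iff₀ hD hX] at hc1
      -- hc1 : (S - δ) * ((ρ:ℝ)+s+1) ≤ δ * ((n:ℝ)+2*N+1)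
      have hstep : (2 + ε) * ((ρ : ℝ) + s + 1) ≤ ε * ((n : ℝ) + 2 * N + 1) := by
        have hmul := mul_le_mul_of_nonneg_left hc1 (by positivity : (0:ℝ) ≤ 2 * (1 + ε))
        have hδeq' : δ * (2 * (1 + ε)) * ((ρ : ℝ) + s + 1) = S * ε * ((ρ : ℝ) + s + 1) := by
          rw [hδeq]
        have hδeq'' : δ * (2 * (1 + ε)) * ((n : ℝ) + 2 * N + 1) = S * ε * ((n : ℝ) + 2 * N + 1) := by
          rw [hδeq]
        have hfin : S * ((2 + ε) * ((ρ : ℝ) + s + 1)) ≤ S * (ε * ((n : ℝ) + 2 * N + 1)) := by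
          nlinarith [hmul, hδeq', hδeq'']
        exact le_of_mul_le_mul_left hfin hS
      rw [hfreqv]
      constructor
      · positivity
      · rw [div_lt_iff₀ (by positivity)]
        nlinarith [hstep, hε, hnR, mul_le_mul_of_nonneg_left h3 hε.le]
  · -- the minimizing set is empty: the frequency is 0 by convention
    left
    have h0 : sInf K = 0 := by
      rw [Set.not_nonempty_iff_eq_empty] at hK
      rw [hK]
      exact Nat.sInf_empty
    rw [hfreq, h0]
    norm_num
    exact hε

lemma avg_neg (f : ℤ → ℝ) (ρ s : ℕ) (n : ℤ) :
    udiscAvg (fun k => f (-k)) ρ s (-n) = udiscAvg f s ρ n := by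
  rw [avg_eq, avg_eq]
  have hsum : ∑ k ∈ Finset.Icc (-n - (ρ : ℤ)) (-n + (s : ℤ)), |f (-k)|
      = ∑ k ∈ Finset.Icc (n - (s : ℤ)) (n + (ρ : ℤ)), |f k| := by
    apply Finset.sum_equiv (Equiv.neg ℤ)
    · intro k
      simp only [Finset.mem_Icc, Equiv.neg_apply]
      omega
    · intro k _
      simp
  rw [hsum]
  ring_nf

lemma max_neg (f : ℤ → ℝ) (n : ℤ) :
    udiscMax (fun k => f (-k)) (-n) = udiscMax f n := by
  unfold udiscMax
  rw [iSup, iSup]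
  congr 1
  ext x
  constructor
  · rintro ⟨⟨ρ, s⟩, rfl⟩
    exact ⟨(s, ρ), (avg_neg f ρ s n).symm⟩
  · rintro ⟨⟨ρ, s⟩, rfl⟩
    exact ⟨(s, ρ), avg_neg f s ρ n⟩

lemma freq_neg (f : ℤ → ℝ) (n : ℤ) :
    udiscFreq (fun k => f (-k)) (-n) = udiscFreq f n := by
  have hset : {m : ℕ | ∃ ρ s : ℕ, ρ + s = m ∧
        udiscMax (fun k => f (-k)) (-n) = udiscAvg (fun k => f (-k)) ρ s (-n)}
      = {m : ℕ | ∃ ρ s : ℕ, ρ + s = m ∧ udiscMax f n = udiscAvg f ρ s n} := by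
    ext m
    constructor
    · rintro ⟨ρ, s, hρs, heq⟩
      exact ⟨s, ρ, by omega, by rw [← max_neg f n, heq, avg_neg]⟩
    · rintro ⟨ρ, s, hρs, heq⟩
      exact ⟨s, ρ, by omega, by rw [max_neg f n, heq]; exact (avg_neg f s ρ n).symm⟩
  unfold udiscFreq
  rw [hset]

end Stmt12Aux

theorem stmt12 (f : ℤ → ℝ) (hf : Summable fun n => |f n|) (ε : ℝ) (hε : 0 < ε) :
    {n : ℤ | udiscFreq f n / |(n : ℝ)| ∉
      Set.Ico (0 : ℝ) ε ∪ Set.Ioo (1 / 2 - ε) (1 / 2 + ε)}.Finite := by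
  classical
  open Stmt12Aux in
  set S := ∑' k, |f k| with hSdef
  have hS0 : 0 ≤ S := tsum_nonneg fun _ => abs_nonneg _
  rcases eq_or_lt_of_le hS0 with hS | hS
  · -- trivial case : f ≡ 0
    apply Set.Finite.subset Set.finite_empty
    intro n hn
    exfalso
    apply hn
    left
    have hall : udiscFreq f n = 0 := by
      have havg : ∀ ρ s : ℕ, udiscAvg f ρ s n = 0 := by
        intro ρ s
        have hle := Stmt12Aux.avg_le_S f hf ρ s n
        have hge := Stmt12Aux.avg_nonneg f ρ s n
        rw [← hSdef, ← hS] at hle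
        linarith
      have hmax : udiscMax f n = 0 := by
        unfold udiscMax
        have : (fun p : ℕ × ℕ => udiscAvg f p.1 p.2 n) = fun _ => (0:ℝ) :=
          funext fun p => havg p.1 p.2
        rw [this]
        exact ciSup_const
      have h0K : (0 : ℕ) ∈ {m : ℕ | ∃ ρ s : ℕ, ρ + s = m ∧ udiscMax f n = udiscAvg f ρ s n} :=
        ⟨0, 0, rfl, by rw [hmax, havg]⟩
      unfold udiscFreq
      rw [Nat.sInf_eq_zero.mpr (Or.inl h0K)]
      norm_num
    rw [hall, zero_div]
    exact ⟨le_refl _, hε⟩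
  · -- main case
    set δ := S * ε / (2 * (1 + ε)) with hδdef
    have hδpos : 0 < δ := by positivity
    have h1 : S - δ < S := by linarith
    obtain ⟨T, hT⟩ := ((hf.hasSum.eventually (eventually_gt_nhds h1))).exists
    set N := T.sup (fun k => k.natAbs) with hNdef
    have hTN : T ⊆ Finset.Icc (-(N : ℤ)) (N : ℤ) := by
      intro k hk
      have hle : k.natAbs ≤ N := Finset.le_sup (f := fun k : ℤ => k.natAbs) hk
      simp only [Finset.mem_Icc]
      omega
    have hN' : S - δ < ∑ k ∈ Finset.Icc (-(N : ℤ)) (N : ℤ), |f k| :=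
      hT.trans_le (Finset.sum_le_sum_of_subset_of_nonneg hTN fun _ _ _ => abs_nonneg _)
    obtain ⟨B, hB⟩ := exists_nat_gt
      (max (max ((N : ℝ) / (2 * ε)) ((1 + ε) * (2 * (N : ℝ) + 1) / ε)) (2 * (N : ℝ) + 1))
    apply Set.Finite.subset (Set.finite_Icc (-(B : ℤ)) (B : ℤ))
    intro n hn
    by_contra hmem
    rw [Set.mem_Icc] at hmem
    have hcases : (B : ℤ) < n ∨ n < -(B : ℤ) := by omega
    have hBa : (N : ℝ) / (2 * ε) < (B : ℝ) :=
      lt_of_le_of_lt (le_trans (le_max_left _ _) (le_max_left _ _)) hB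
    have hBb : (1 + ε) * (2 * (N : ℝ) + 1) / ε < (B : ℝ) :=
      lt_of_le_of_lt (le_trans (le_max_right _ _) (le_max_left _ _)) hB
    have hBc : 2 * (N : ℝ) + 1 < (B : ℝ) := lt_of_le_of_lt (le_max_right _ _) hB
    rcases hcases with hpos | hneg
    · have hnB : (B : ℝ) < (n : ℝ) := by exact_mod_cast hpos
      exact hn (Stmt12Aux.key f hf ε hε N hS hN' n (by omega)
        (hBa.trans hnB) (hBb.trans hnB) (hBc.trans hnB).le)
    · -- use the reflected function
      set g : ℤ → ℝ := fun k => f (-k) with hgdef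
      have hg : Summable fun k => |g k| := by
        have : (fun k : ℤ => |g k|) = (fun k : ℤ => |f k|) ∘ (Equiv.neg ℤ) := rfl
        rw [this, Equiv.summable_iff]
        exact hf
      have hgt : (∑' k, |g k|) = S := by
        rw [hSdef]
        exact (Equiv.neg ℤ).tsum_eq (fun k => |f k|)
      have hgsum : ∑ k ∈ Finset.Icc (-(N : ℤ)) (N : ℤ), |g k|
          = ∑ k ∈ Finset.Icc (-(N : ℤ)) (N : ℤ), |f k| := by
        apply Finset.sum_equiv (Equiv.neg ℤ)
        · intro k
          simp only [Finset.mem_Icc, Equiv.neg_apply]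
          omega
        · intro k _
          simp [hgdef]
      have hgN : (∑' k, |g k|) - (∑' k, |g k|) * ε / (2 * (1 + ε)) <
          ∑ k ∈ Finset.Icc (-(N : ℤ)) (N : ℤ), |g k| := by
        rw [hgt, hgsum]
        exact hN'
      have hnB : (B : ℝ) < ((-n : ℤ) : ℝ) := by
        push_cast
        have : (n : ℝ) < -(B : ℝ) := by exact_mod_cast hneg
        linarith
      have hkey := Stmt12Aux.key g hg ε hε N (by rw [hgt]; exact hS) hgN (-n)
        (by omega) (hBa.trans hnB) (hBb.trans hnB) (hBc.trans hnB).le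
      rw [Stmt12Aux.freq_neg f n] at hkey
      have habsneg : |((-n : ℤ) : ℝ)| = |(n : ℝ)| := by
        push_cast
        exact abs_neg _
      rw [habsneg] at hkey
      exact hn hkey
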